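/- arXiv:math/0701101 — 2 statements merged into one kernel-verified Lean document; each statement's English description precedes it below -/
import Mathlib

section
/- The Finite R_ε-Conjecture implies the R_ε-Conjecture. That is, assume that for all 0 < ε and 0 < A ≤ B there is a natural number r = r(ε, A, B) such that for every n ∈ ℕ and every unit norm Riesz basic sequence {f_i}_{i=1}^n in ℓ₂ⁿ with Riesz basis bounds A, B, there is a partition {A_1,…,A_r} of {1,…,n} such that each {f_i}_{i∈A_j} is an ε-Riesz basic sequence. Then for every ε > 0, every Hilbert space H, and every unit norm Riesz basic sequence {f_i}_{i=1}^∞ in H with bounds 0 < A ≤ B, there is a finite partition {A_1,…,A_r} of ℕ such that each {f_i}_{i∈A_j} is an ε-Riesz basic sequence. -/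
/-!
A unit norm Riesz basic sequence is linearly independent, so its first `n` vectors are the
isometric image of `n` vectors in `ℓ₂ⁿ` with the same Riesz bounds; the finite conjecture
therefore colours every initial segment `{0, …, n - 1}` with `r` colours into `ε`-Riesz basic
sequences. By compactness of `ℕ → Fin r` (a diagonal argument) some colouring of `ℕ` agrees on
every finite set with one of these colourings, and being an `ε`-Riesz basic sequence is a
condition on finite subsets only.
-/

/-- `f` restricted to the index set `S` is a Riesz basic sequence with lower bound `A`
and upper bound `B`. -/
def IsRieszOn {H : Type*} [NormedAddCommGroup H] [InnerProductSpace ℂ H]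
    {ι : Type*} (f : ι → H) (S : Set ι) (A B : ℝ) : Prop :=
  ∀ s : Finset ι, ↑s ⊆ S → ∀ a : ι → ℂ,
    A ^ 2 * ∑ i ∈ s, ‖a i‖ ^ 2 ≤ ‖∑ i ∈ s, a i • f i‖ ^ 2 ∧
    ‖∑ i ∈ s, a i • f i‖ ^ 2 ≤ B ^ 2 * ∑ i ∈ s, ‖a i‖ ^ 2

open Set Filter

theorem exists_forall_finset_exists_eq {α : Type*} [Finite α] (u : ∀ n, Fin n → α) :
    ∃ c : ℕ → α, ∀ s : Finset ℕ, ∃ n, ∀ i ∈ s, ∃ h : i < n, u n ⟨i, h⟩ = c i := by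
  -- `ℕ → α` with the product of discrete topologies is compact and metrizable.
  let _ : TopologicalSpace α := ⊥
  have : DiscreteTopology α := ⟨rfl⟩
  let v : ℕ → ℕ → α := fun n => Function.extend Fin.val (u n) fun _ => u 1 0
  obtain ⟨c, φ, hφ, hlim⟩ := CompactSpace.tendsto_subseq v
  refine ⟨c, fun s => ?_⟩
  have hagree : ∀ᶠ k in atTop, ∀ i ∈ s, v (φ k) i = c i :=
    s.eventually_all.2 fun i _ => by
      simpa [nhds_discrete] using tendsto_pi_nhds.1 hlim i
  have hlarge : ∀ᶠ k in atTop, s.sup id < φ k := hφ.tendsto_atTop.eventually_gt_atTop _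
  obtain ⟨k, hk, hk'⟩ := (hagree.and hlarge).exists
  refine ⟨φ k, fun i hi => ⟨(Finset.le_sup (f := id) hi).trans_lt hk', ?_⟩⟩
  rw [← hk i hi]
  exact (Fin.val_injective.extend_apply (u (φ k)) _ ⟨i, _⟩).symm

section Riesz

variable {H : Type*} [NormedAddCommGroup H] [InnerProductSpace ℂ H] {ι : Type*}
  {f : ι → H} {S T : Set ι} {A B : ℝ}

theorem IsRieszOn.mono (hf : IsRieszOn f S A B) (hTS : T ⊆ S) : IsRieszOn f T A B :=
  fun s hs => hf s (hs.trans hTS)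

theorem IsRieszOn.linearIndependent (hf : IsRieszOn f univ A B) (hA : A ≠ 0) :
    LinearIndependent ℂ f := by
  refine linearIndependent_iff'.2 fun s a hsum i hi => ?_
  have hle := (hf s (subset_univ _) a).1
  rw [hsum, norm_zero, zero_pow two_ne_zero] at hle
  have hzero : ∑ i ∈ s, ‖a i‖ ^ 2 = 0 :=
    le_antisymm (nonpos_of_mul_nonpos_right hle (by positivity))
      (Finset.sum_nonneg fun _ _ => by positivity)
  simpa using (Finset.sum_eq_zero_iff_of_nonneg (fun _ _ => by positivity)).1 hzero i hi

theorem isRieszOn_linearIsometry_comp_iff {E : Type*} [NormedAddCommGroup E]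
    [InnerProductSpace ℂ E] (L : H →ₗᵢ[ℂ] E) :
    IsRieszOn (L ∘ f) S A B ↔ IsRieszOn f S A B := by
  have hnorm : ∀ (s : Finset ι) (a : ι → ℂ),
      ‖∑ i ∈ s, a i • (L ∘ f) i‖ = ‖∑ i ∈ s, a i • f i‖ := fun s a => by
    simp only [Function.comp_apply, ← map_smul, ← map_sum, L.norm_map]
  simp only [IsRieszOn, hnorm]

theorem isRieszOn_comp_iff {κ : Type*} {g : κ → H} {e : ι → κ} (he : e.Injective) :
    IsRieszOn (g ∘ e) S A B ↔ IsRieszOn g (e '' S) A B := by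
  classical
  constructor
  · intro hg t ht a
    have hrange : ↑t ⊆ range e := ht.trans (image_subset_range e S)
    have hpre : ↑(t.preimage e he.injOn) ⊆ S := fun i hi => by
      obtain ⟨j, hj, hji⟩ := ht (Finset.mem_preimage.1 hi)
      exact he hji ▸ hj
    have := hg _ hpre (a ∘ e)
    simp only [Function.comp_apply] at this
    rwa [Finset.sum_preimage e t he.injOn (fun k => ‖a k‖ ^ 2)
        fun k hk hk' => (hk' (hrange hk)).elim,
      Finset.sum_preimage e t he.injOn (fun k => a k • g k)
        fun k hk hk' => (hk' (hrange hk)).elim] at this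
  · intro hg s hs a
    have := hg (s.map ⟨e, he⟩) (by simpa using image_mono hs) (Function.extend e a 0)
    simpa [Finset.sum_map, he.extend_apply] using this

end Riesz

theorem exists_linearIsometry_comp_eq {𝕜 E : Type*} [RCLike 𝕜] [NormedAddCommGroup E]
    [InnerProductSpace 𝕜 E] {n : ℕ} {v : Fin n → E} (hv : LinearIndependent 𝕜 v) :
    ∃ (g : Fin n → EuclideanSpace 𝕜 (Fin n)) (L : EuclideanSpace 𝕜 (Fin n) →ₗᵢ[𝕜] E),
      L ∘ g = v := by
  let V := Submodule.span 𝕜 (range v)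
  have hdim : Module.finrank 𝕜 V = n := by
    rw [finrank_span_eq_card hv, Fintype.card_fin]
  have : FiniteDimensional 𝕜 V := FiniteDimensional.span_of_finite 𝕜 (finite_range v)
  let e : V ≃ₗᵢ[𝕜] EuclideanSpace 𝕜 (Fin n) :=
    ((stdOrthonormalBasis 𝕜 V).reindex (finCongr hdim)).repr
  refine ⟨fun i => e ⟨v i, Submodule.subset_span (mem_range_self i)⟩,
    V.subtypeₗᵢ.comp e.symm.toLinearIsometry, ?_⟩
  ext i
  simp

theorem IsRieszOn.exists_coloring_of_euclideanSpace {H : Type*} [NormedAddCommGroup H]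
    [InnerProductSpace ℂ H] {n r : ℕ} {A B A' B' : ℝ}
    (hr : ∀ g : Fin n → EuclideanSpace ℂ (Fin n), (∀ i, ‖g i‖ = 1) → IsRieszOn g univ A B →
      ∃ c : Fin n → Fin r, ∀ j, IsRieszOn g {i | c i = j} A' B')
    {v : Fin n → H} (hv : IsRieszOn v univ A B) (hA : A ≠ 0) (hnorm : ∀ i, ‖v i‖ = 1) :
    ∃ c : Fin n → Fin r, ∀ j, IsRieszOn v {i | c i = j} A' B' := by
  obtain ⟨g, L, hLg⟩ := exists_linearIsometry_comp_eq (hv.linearIndependent hA)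
  have hriesz : ∀ S A B, IsRieszOn g S A B ↔ IsRieszOn v S A B := fun S A B => by
    rw [← hLg, isRieszOn_linearIsometry_comp_iff]
  have hgnorm : ∀ i, ‖g i‖ = 1 := fun i => by
    rw [← hnorm i, ← hLg, Function.comp_apply, L.norm_map]
  obtain ⟨c, hc⟩ := hr g hgnorm ((hriesz _ _ _).2 hv)
  exact ⟨c, fun j => (hriesz _ _ _).1 (hc j)⟩

/-- The Finite `R_ε`-Conjecture implies the `R_ε`-Conjecture. -/
theorem finite_R_epsilon_implies_R_epsilon
    (hfin : ∀ ε A B : ℝ, 0 < ε → 0 < A → A ≤ B → ∃ r : ℕ, ∀ n : ℕ,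
      ∀ f : Fin n → EuclideanSpace ℂ (Fin n), (∀ i, ‖f i‖ = 1) →
      IsRieszOn f Set.univ A B →
      ∃ c : Fin n → Fin r, ∀ j : Fin r,
        IsRieszOn f {i | c i = j} (1 - ε) (1 + ε)) :
    ∀ ε : ℝ, 0 < ε →
      ∀ (H : Type*) (_ : NormedAddCommGroup H) (_ : InnerProductSpace ℂ H)
        (_ : CompleteSpace H), ∀ f : ℕ → H, ∀ A B : ℝ, 0 < A → A ≤ B →
        (∀ i, ‖f i‖ = 1) → IsRieszOn f Set.univ A B →
        ∃ r : ℕ, ∃ c : ℕ → Fin r, ∀ j : Fin r,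
          IsRieszOn f {i | c i = j} (1 - ε) (1 + ε) := by
  intro ε hε H _ _ _ f A B hA hAB hnorm hf
  obtain ⟨r, hr⟩ := hfin ε A B hε hA hAB
  choose col hcol using fun n => IsRieszOn.exists_coloring_of_euclideanSpace (hr n)
    ((isRieszOn_comp_iff Fin.val_injective).2 (hf.mono (subset_univ _))) hA.ne' fun i => hnorm i
  obtain ⟨c, hc⟩ := exists_forall_finset_exists_eq col
  refine ⟨r, c, fun j s hs a => ?_⟩
  obtain ⟨n, hn⟩ := hc s
  have hsub : ↑s ⊆ Fin.val '' {i | col n i = j} := fun i hi =>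
    let ⟨hlt, heq⟩ := hn i hi
    ⟨⟨i, hlt⟩, heq.trans (hs hi), rfl⟩
  exact (isRieszOn_comp_iff Fin.val_injective).1 (hcol n j) s hsub a
end

section
/- Let {f_i}_{i=1}^∞ be a unit norm Riesz basic sequence in a Hilbert space H with bounds 0 < A ≤ B, and let ε > 0. Then there is a natural number r and a partition {A_1,…,A_r} of ℕ such that for each j = 1,…,r, the family {f_i}_{i∈A_j} is ε-minimal: for every i ∈ A_j, if P_i denotes the orthogonal projection onto the closed linear span of { f_ℓ : ℓ ∈ A_j, ℓ ≠ i }, then ‖P_i f_i‖ ≤ ε. -/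
/-!
Join `i` and `l` by an edge of weight `‖⟪f i, f l⟫‖²`. The upper Riesz bound is a Bessel bound,
so every vertex has total weight at most `B²`. A colouring with `r > B² / (A² ε²)` colours that
minimises the weight of monochromatic edges (on finite sets; then on `ℕ` by compactness) cannot
be improved by recolouring one vertex, so each vertex has monochromatic weight at most
`B² / r < A² ε²`. The lower Riesz bound then keeps `f i` at squared distance at least `1 - ε²`
from the span of the other vectors of its colour, and Pythagoras gives `‖P_i f_i‖ ≤ ε`.
-/

open scoped InnerProductSpace

open Finset Filter

theorem Filter.exists_frequently_forall_mem_eq {ι α κ : Type*} [Finite κ] (l : Filter ι) [l.NeBot]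
    (c : ι → α → κ) : ∃ c₀ : α → κ, ∀ s : Finset α, ∃ᶠ n in l, ∀ a ∈ s, c n a = c₀ a := by
  set U := Ultrafilter.of l
  choose c₀ hc₀ using fun a => (U.map fun n => c n a).eq_pure_of_finite
  refine ⟨c₀, fun s => ?_⟩
  have hU : ∀ᶠ n in (U : Filter ι), ∀ a ∈ s, c n a = c₀ a := by
    refine (eventually_all_finset s).2 fun a _ => ?_
    have h : ({c₀ a} : Set κ) ∈ U.map fun n => c n a := by
      rw [hc₀ a]
      exact Ultrafilter.mem_pure.2 rfl
    exact Ultrafilter.mem_map.1 h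
  exact (Ultrafilter.frequently_iff_eventually.2 hU).filter_mono (Ultrafilter.of_le l)

section Coloring

variable {α κ : Type*} [DecidableEq α] [DecidableEq κ]

def colorWeight (w : α → α → ℝ) (s : Finset α) (c : α → κ) (i : α) (k : κ) : ℝ :=
  ∑ l ∈ s.erase i, if c l = k then w i l else 0

def coloringEnergy (w : α → α → ℝ) (s : Finset α) (c : α → κ) : ℝ :=
  ∑ i ∈ s, colorWeight w s c i (c i)

theorem colorWeight_update_self (w : α → α → ℝ) (s : Finset α) (c : α → κ) (i : α) (k k' : κ) :
    colorWeight w s (Function.update c i k) i k' = colorWeight w s c i k' :=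
  sum_congr rfl fun l hl => by rw [Function.update_of_ne (ne_of_mem_erase hl)]

theorem sum_colorWeight [Fintype κ] (w : α → α → ℝ) (s : Finset α) (c : α → κ) (i : α) :
    ∑ k, colorWeight w s c i k = ∑ l ∈ s.erase i, w i l := by
  unfold colorWeight
  rw [sum_comm]
  simp

theorem coloringEnergy_eq (w : α → α → ℝ) (hw : ∀ i l, w i l = w l i) (s : Finset α)
    (c : α → κ) {i : α} (hi : i ∈ s) :
    coloringEnergy w s c = 2 * colorWeight w s c i (c i) +
      ∑ a ∈ s.erase i, ∑ b ∈ (s.erase a).erase i, if c b = c a then w a b else 0 := by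
  have hsplit : ∀ a ∈ s.erase i, colorWeight w s c a (c a) = (if c i = c a then w a i else 0) +
      ∑ b ∈ (s.erase a).erase i, if c b = c a then w a b else 0 := fun a ha =>
    (add_sum_erase _ _ (mem_erase.2 ⟨(ne_of_mem_erase ha).symm, hi⟩)).symm
  have hback : ∑ a ∈ s.erase i, (if c i = c a then w a i else 0) = colorWeight w s c i (c i) :=
    sum_congr rfl fun a _ => by simp only [hw a i, eq_comm]
  rw [coloringEnergy, ← add_sum_erase _ _ hi, sum_congr rfl hsplit, sum_add_distrib, hback]
  ring

theorem card_mul_colorWeight_le_of_forall_energy_le [Fintype κ] (w : α → α → ℝ)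
    (hw : ∀ i l, w i l = w l i) (s : Finset α) (c : α → κ) {i : α} (hi : i ∈ s)
    (hmin : ∀ k, coloringEnergy w s c ≤ coloringEnergy w s (Function.update c i k)) :
    Fintype.card κ * colorWeight w s c i (c i) ≤ ∑ l ∈ s.erase i, w i l := by
  have hle : ∀ k, colorWeight w s c i (c i) ≤ colorWeight w s c i k := by
    intro k
    have h := hmin k
    rw [coloringEnergy_eq w hw s c hi, coloringEnergy_eq w hw s _ hi, Function.update_self,
      colorWeight_update_self] at h
    have hrest : (∑ a ∈ s.erase i, ∑ b ∈ (s.erase a).erase i,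
          if Function.update c i k b = Function.update c i k a then w a b else 0) =
        ∑ a ∈ s.erase i, ∑ b ∈ (s.erase a).erase i, if c b = c a then w a b else 0 :=
      sum_congr rfl fun a ha => sum_congr rfl fun b hb => by
        rw [Function.update_of_ne (ne_of_mem_erase ha), Function.update_of_ne (ne_of_mem_erase hb)]
    linarith
  calc Fintype.card κ * colorWeight w s c i (c i) = ∑ _k : κ, colorWeight w s c i (c i) := by
        simp
    _ ≤ ∑ k, colorWeight w s c i k := sum_le_sum fun k _ => hle k
    _ = ∑ l ∈ s.erase i, w i l := sum_colorWeight w s c i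

theorem exists_coloring_card_mul_colorWeight_le [Fintype κ] [Nonempty κ] (w : α → α → ℝ)
    (hw : ∀ i l, w i l = w l i) (s : Finset α) :
    ∃ c : α → κ, ∀ i ∈ s, Fintype.card κ * colorWeight w s c i (c i) ≤ ∑ l ∈ s.erase i, w i l := by
  obtain ⟨c₀⟩ := (inferInstance : Nonempty (α → κ))
  set F : Set (α → κ) := {c | ∀ a ∉ s, c a = c₀ a}
  have hF : F.Finite := by
    refine Set.Finite.of_finite_image (f := fun c (a : s) => c a) (Set.toFinite _) ?_
    intro c hc c' hc' h
    funext a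
    by_cases ha : a ∈ s
    · exact congrFun h ⟨a, ha⟩
    · rw [hc a ha, hc' a ha]
  obtain ⟨c, hcF, hmin⟩ := Set.exists_min_image F (coloringEnergy w s) hF ⟨c₀, fun _ _ => rfl⟩
  refine ⟨c, fun i hi => card_mul_colorWeight_le_of_forall_energy_le w hw s c hi fun k => ?_⟩
  refine hmin _ fun a ha => ?_
  rw [Function.update_of_ne (ne_of_mem_of_not_mem hi ha).symm, hcF a ha]

theorem exists_coloring_card_mul_sum_le [Fintype κ] [Nonempty κ] (w : α → α → ℝ)
    (hw_nonneg : ∀ i l, 0 ≤ w i l) (hw : ∀ i l, w i l = w l i) {C : ℝ}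
    (hC : ∀ i (s : Finset α), ∑ l ∈ s, w i l ≤ C) :
    ∃ c : α → κ, ∀ i (t : Finset α), (∀ l ∈ t, l ≠ i ∧ c l = c i) →
      Fintype.card κ * ∑ l ∈ t, w i l ≤ C := by
  choose cs hcs using exists_coloring_card_mul_colorWeight_le (κ := κ) w hw
  obtain ⟨c, hc⟩ := exists_frequently_forall_mem_eq atTop cs
  refine ⟨c, fun i t ht => ?_⟩
  obtain ⟨s, hagree, hsub⟩ :=
    ((hc (insert i t)).and_eventually (eventually_ge_atTop (insert i t))).exists
  have hi : i ∈ s := hsub (mem_insert_self i t)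
  have htw : ∑ l ∈ t, w i l ≤ colorWeight w s (cs s) i (cs s i) := by
    calc ∑ l ∈ t, w i l = ∑ l ∈ t, if cs s l = cs s i then w i l else 0 :=
          sum_congr rfl fun l hl => by
            rw [hagree l (mem_insert_of_mem hl), hagree i (mem_insert_self i t), (ht l hl).2,
              if_pos rfl]
      _ ≤ colorWeight w s (cs s) i (cs s i) :=
          sum_le_sum_of_subset_of_nonneg
            (fun l hl => mem_erase.2 ⟨(ht l hl).1, hsub (mem_insert_of_mem hl)⟩)
            fun l _ _ => by split_ifs <;> simp [hw_nonneg]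
  calc Fintype.card κ * ∑ l ∈ t, w i l ≤ Fintype.card κ * colorWeight w s (cs s) i (cs s i) :=
        mul_le_mul_of_nonneg_left htw (Nat.cast_nonneg _)
    _ ≤ ∑ l ∈ s.erase i, w i l := hcs s i hi
    _ ≤ C := hC i _

end Coloring

section RieszBounds

variable {𝕜 E ι : Type*} [RCLike 𝕜] [NormedAddCommGroup E] [InnerProductSpace 𝕜 E]

theorem sum_norm_inner_sq_le_of_norm_sum_smul_sq_le {f : ι → E} {B : ℝ}
    (hupper : ∀ (s : Finset ι) (a : ι → 𝕜), ‖∑ i ∈ s, a i • f i‖ ^ 2 ≤ B ^ 2 * ∑ i ∈ s, ‖a i‖ ^ 2)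
    (x : E) (s : Finset ι) : ∑ l ∈ s, ‖⟪x, f l⟫_𝕜‖ ^ 2 ≤ B ^ 2 * ‖x‖ ^ 2 := by
  set S := ∑ l ∈ s, ‖⟪x, f l⟫_𝕜‖ ^ 2
  set g := ∑ l ∈ s, ⟪f l, x⟫_𝕜 • f l
  have hS : 0 ≤ S := sum_nonneg fun l _ => sq_nonneg _
  have hinner : ⟪x, g⟫_𝕜 = S := by
    simp only [g, S, inner_sum]
    push_cast
    refine sum_congr rfl fun l _ => ?_
    rw [inner_smul_right, ← inner_conj_symm (f l) x, RCLike.conj_mul]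
  have hSg : S ≤ ‖x‖ * ‖g‖ := by
    simpa [hinner, abs_of_nonneg hS] using norm_inner_le_norm (𝕜 := 𝕜) x g
  have hg : ‖g‖ ^ 2 ≤ B ^ 2 * S := by
    simpa only [norm_inner_symm] using hupper s fun l => ⟪f l, x⟫_𝕜
  have hSS : S * S ≤ B ^ 2 * ‖x‖ ^ 2 * S := by
    calc S * S ≤ (‖x‖ * ‖g‖) ^ 2 := by nlinarith
      _ = ‖x‖ ^ 2 * ‖g‖ ^ 2 := by ring
      _ ≤ ‖x‖ ^ 2 * (B ^ 2 * S) := by gcongr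
      _ = B ^ 2 * ‖x‖ ^ 2 * S := by ring
  rcases hS.eq_or_lt with h | h
  · rw [← h]; positivity
  · exact le_of_mul_le_mul_right hSS h

theorem norm_sq_sub_le_norm_sub_sum_smul_sq {f : ι → E} {A : ℝ} (hA : A ≠ 0)
    (hlower : ∀ (s : Finset ι) (a : ι → 𝕜), A ^ 2 * ∑ i ∈ s, ‖a i‖ ^ 2 ≤ ‖∑ i ∈ s, a i • f i‖ ^ 2)
    (x : E) (s : Finset ι) (a : ι → 𝕜) :
    ‖x‖ ^ 2 - (∑ l ∈ s, ‖⟪x, f l⟫_𝕜‖ ^ 2) / A ^ 2 ≤ ‖x - ∑ l ∈ s, a l • f l‖ ^ 2 := by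
  set y := ∑ l ∈ s, a l • f l
  have hA2 : 0 < A ^ 2 := by positivity
  have hre : RCLike.re ⟪x, y⟫_𝕜 ≤ ∑ l ∈ s, ‖a l‖ * ‖⟪x, f l⟫_𝕜‖ :=
    calc RCLike.re ⟪x, y⟫_𝕜 ≤ ‖⟪x, y⟫_𝕜‖ := RCLike.re_le_norm _
      _ = ‖∑ l ∈ s, a l * ⟪x, f l⟫_𝕜‖ := by simp only [y, inner_sum, inner_smul_right]
      _ ≤ ∑ l ∈ s, ‖a l‖ * ‖⟪x, f l⟫_𝕜‖ := by
          simpa only [norm_mul] using norm_sum_le s fun l => a l * ⟪x, f l⟫_𝕜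
  -- AM-GM, termwise: `2 u v ≤ A² u² + v² / A²`
  have hamgm : 2 * ∑ l ∈ s, ‖a l‖ * ‖⟪x, f l⟫_𝕜‖ ≤
      A ^ 2 * ∑ l ∈ s, ‖a l‖ ^ 2 + (∑ l ∈ s, ‖⟪x, f l⟫_𝕜‖ ^ 2) / A ^ 2 := by
    rw [mul_sum, mul_sum, sum_div, ← sum_add_distrib]
    refine sum_le_sum fun l _ => ?_
    rw [← sub_nonneg]
    have : A ^ 2 * ‖a l‖ ^ 2 + ‖⟪x, f l⟫_𝕜‖ ^ 2 / A ^ 2 - 2 * (‖a l‖ * ‖⟪x, f l⟫_𝕜‖) =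
        (A ^ 2 * ‖a l‖ - ‖⟪x, f l⟫_𝕜‖) ^ 2 / A ^ 2 := by
      field_simp
      ring
    rw [this]
    positivity
  have hexpand : ‖x - y‖ ^ 2 = ‖x‖ ^ 2 - 2 * RCLike.re ⟪x, y⟫_𝕜 + ‖y‖ ^ 2 := norm_sub_sq x y
  linarith [hlower s a]

theorem norm_sq_sub_le_norm_sub_sq_of_mem_span {f : ι → E} {A : ℝ} (hA : A ≠ 0)
    (hlower : ∀ (s : Finset ι) (a : ι → 𝕜), A ^ 2 * ∑ i ∈ s, ‖a i‖ ^ 2 ≤ ‖∑ i ∈ s, a i • f i‖ ^ 2)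
    {x : E} {T : Set ι} {η : ℝ}
    (hT : ∀ t : Finset ι, ↑t ⊆ T → ∑ l ∈ t, ‖⟪x, f l⟫_𝕜‖ ^ 2 ≤ A ^ 2 * η)
    {y : E} (hy : y ∈ Submodule.span 𝕜 (f '' T)) : ‖x‖ ^ 2 - η ≤ ‖x - y‖ ^ 2 := by
  obtain ⟨a, ha, rfl⟩ := (Finsupp.mem_span_image_iff_linearCombination 𝕜).1 hy
  have hsmall : (∑ l ∈ a.support, ‖⟪x, f l⟫_𝕜‖ ^ 2) / A ^ 2 ≤ η := by
    rw [div_le_iff₀ (by positivity), mul_comm]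
    exact hT _ ((Finsupp.mem_supported 𝕜 a).1 ha)
  have := norm_sq_sub_le_norm_sub_sum_smul_sq hA hlower x a.support a
  rw [Finsupp.linearCombination_apply, Finsupp.sum]
  linarith

end RieszBounds

theorem Submodule.norm_starProjection_topologicalClosure_sq_le {𝕜 E : Type*} [RCLike 𝕜]
    [NormedAddCommGroup E] [InnerProductSpace 𝕜 E] [CompleteSpace E] (K : Submodule 𝕜 E)
    {x : E} {m : ℝ} (h : ∀ y ∈ K, m ≤ ‖x - y‖ ^ 2) :
    ‖K.topologicalClosure.starProjection x‖ ^ 2 ≤ ‖x‖ ^ 2 - m := by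
  have hclosure : ∀ y ∈ K.topologicalClosure, m ≤ ‖x - y‖ ^ 2 := by
    intro y hy
    rw [← SetLike.mem_coe, K.topologicalClosure_coe] at hy
    exact closure_minimal h
      (isClosed_le continuous_const ((continuous_const.sub continuous_id).norm.pow 2)) hy
  have hpyth := norm_sq_eq_add_norm_sq_starProjection x K.topologicalClosure
  rw [starProjection_orthogonal_val] at hpyth
  linarith [hclosure _ (K.topologicalClosure.starProjection_apply_mem x)]

theorem exists_partition_eps_minimal_general {H : Type*} [NormedAddCommGroup H]
    [InnerProductSpace ℂ H] [CompleteSpace H]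
    (f : ℕ → H) (A B ε : ℝ) (hA : 0 < A) (hε : 0 < ε)
    (hnorm : ∀ i, ‖f i‖ = 1)
    (hriesz : ∀ s : Finset ℕ, ∀ a : ℕ → ℂ,
      A ^ 2 * ∑ i ∈ s, ‖a i‖ ^ 2 ≤ ‖∑ i ∈ s, a i • f i‖ ^ 2 ∧
      ‖∑ i ∈ s, a i • f i‖ ^ 2 ≤ B ^ 2 * ∑ i ∈ s, ‖a i‖ ^ 2) :
    ∃ (r : ℕ) (c : ℕ → Fin r), ∀ j : Fin r, ∀ i : ℕ, c i = j →
      ‖(Submodule.orthogonalProjection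
          ((Submodule.span ℂ (f '' {ℓ | ℓ ≠ i ∧ c ℓ = j})).topologicalClosure)
          (f i) : H)‖ ≤ ε := by
  have hrow (i : ℕ) (s : Finset ℕ) : ∑ l ∈ s, ‖⟪f i, f l⟫_ℂ‖ ^ 2 ≤ B ^ 2 := by
    simpa [hnorm i] using
      sum_norm_inner_sq_le_of_norm_sum_smul_sq_le (fun s a => (hriesz s a).2) (f i) s
  obtain ⟨r, hr⟩ := exists_nat_gt (B ^ 2 / (A ^ 2 * ε ^ 2))
  have hr₀ : 0 < r := by exact_mod_cast (div_nonneg (sq_nonneg B) (by positivity)).trans_lt hr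
  have : Nonempty (Fin r) := ⟨⟨0, hr₀⟩⟩
  obtain ⟨c, hc⟩ := exists_coloring_card_mul_sum_le (κ := Fin r) (fun i l => ‖⟪f i, f l⟫_ℂ‖ ^ 2)
    (fun _ _ => sq_nonneg _) (fun i l => by rw [norm_inner_symm]) hrow
  refine ⟨r, c, ?_⟩
  rintro _ i rfl
  have hsmall (t : Finset ℕ) (ht : ↑t ⊆ {ℓ | ℓ ≠ i ∧ c ℓ = c i}) :
      ∑ l ∈ t, ‖⟪f i, f l⟫_ℂ‖ ^ 2 ≤ A ^ 2 * ε ^ 2 := by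
    have hct : (r : ℝ) * ∑ l ∈ t, ‖⟪f i, f l⟫_ℂ‖ ^ 2 ≤ B ^ 2 := by
      simpa using hc i t fun l hl => ht hl
    have hB : B ^ 2 < r * (A ^ 2 * ε ^ 2) := (div_lt_iff₀ (by positivity)).1 hr
    exact (lt_of_mul_lt_mul_left (hct.trans_lt hB) (Nat.cast_nonneg r)).le
  have hproj := Submodule.norm_starProjection_topologicalClosure_sq_le _ fun y hy =>
    norm_sq_sub_le_norm_sub_sq_of_mem_span hA.ne' (fun s a => (hriesz s a).1) hsmall hy
  rw [hnorm i, sub_sub_cancel] at hproj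
  exact (pow_le_pow_iff_left₀ (norm_nonneg _) hε.le two_ne_zero).1 hproj

/-- Corollary: every unit norm Riesz basic sequence `{f_i}_{i=1}^∞` in a Hilbert space,
with bounds `0 < A ≤ B`, admits for every `ε > 0` a finite partition `{A_1,…,A_r}` of `ℕ`
(encoded by a coloring `c`, with `A_j = {i | c i = j}`) such that each `{f_i}_{i ∈ A_j}`
is `ε`-minimal: for each `i ∈ A_j`, the orthogonal projection `P_i` onto the closed
linear span of `{f_ℓ : ℓ ∈ A_j, ℓ ≠ i}` satisfies `‖P_i f_i‖ ≤ ε`. -/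
theorem exists_partition_eps_minimal {H : Type*} [NormedAddCommGroup H]
    [InnerProductSpace ℂ H] [CompleteSpace H]
    (f : ℕ → H) (A B ε : ℝ) (hA : 0 < A) (hAB : A ≤ B) (hε : 0 < ε)
    (hnorm : ∀ i, ‖f i‖ = 1)
    (hriesz : ∀ s : Finset ℕ, ∀ a : ℕ → ℂ,
      A ^ 2 * ∑ i ∈ s, ‖a i‖ ^ 2 ≤ ‖∑ i ∈ s, a i • f i‖ ^ 2 ∧
      ‖∑ i ∈ s, a i • f i‖ ^ 2 ≤ B ^ 2 * ∑ i ∈ s, ‖a i‖ ^ 2) :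
    ∃ (r : ℕ) (c : ℕ → Fin r), ∀ j : Fin r, ∀ i : ℕ, c i = j →
      ‖(Submodule.orthogonalProjection
          ((Submodule.span ℂ (f '' {ℓ | ℓ ≠ i ∧ c ℓ = j})).topologicalClosure)
          (f i) : H)‖ ≤ ε :=
  exists_partition_eps_minimal_general f A B ε hA hε hnorm hriesz
end
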